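/- Fix λ ≠ 0. The functions X(ξ,η) = η + ln|(−ξβ₀ + 2λ + (γ₀−λ)ξe^{δ₀/λ})/(−ξβ₀ + 2λ + (γ₀+λ)ξe^{δ₀/λ})|, γ(ξ) = γ₀ + ξ(γ₀²−λ²)e^{δ₀/λ}/(−ξβ₀+2λ), δ(ξ) = λ ln|4λ²e^{δ₀/λ}/((−ξβ₀+2λ+(γ₀+λ)ξe^{δ₀/λ})(−ξβ₀+2λ+(γ₀−λ)ξe^{δ₀/λ}))|, β(ξ) = 2λβ₀/(−ξβ₀+2λ), and m(ξ) = m₀(−ξβ₀+2λ+(γ₀−λ)ξe^{δ₀/λ})²(−ξβ₀+2λ+(γ₀+λ)ξe^{δ₀/λ})²/(−ξβ₀+2λ)⁴ solve the ODE system ∂X/∂ξ = −e^{δ/λ}, ∂m/∂ξ = (2/λ)γ e^{δ/λ} m, ∂γ/∂ξ = −(1/(2λ))e^{δ/λ}(λ² − γ²), ∂δ/∂ξ = β − γe^{δ/λ}, ∂β/∂ξ = (1/(2λ))β², with initial values X(0)=η, m(0)=m₀, γ(0)=γ₀, δ(0)=δ₀, β(0)=β₀, on the maximal interval of ξ where the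 denominators are nonzero and positive where needed. -/

import Mathlib

noncomputable section

/-- A(ξ) = -ξβ₀ + 2λ -/
def chA (lam β₀ : ℝ) (ξ : ℝ) : ℝ := -ξ * β₀ + 2 * lam

/-- D₊(ξ) = -ξβ₀ + 2λ + (γ₀+λ)ξ e^{δ₀/λ} -/
def chDp (lam β₀ γ₀ δ₀ : ℝ) (ξ : ℝ) : ℝ :=
  chA lam β₀ ξ + (γ₀ + lam) * ξ * Real.exp (δ₀ / lam)

/-- D₋(ξ) = -ξβ₀ + 2λ + (γ₀-λ)ξ e^{δ₀/λ} -/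
def chDm (lam β₀ γ₀ δ₀ : ℝ) (ξ : ℝ) : ℝ :=
  chA lam β₀ ξ + (γ₀ - lam) * ξ * Real.exp (δ₀ / lam)

/-- X(ξ) -/
def chX (lam β₀ γ₀ δ₀ η : ℝ) (ξ : ℝ) : ℝ :=
  η + Real.log |chDm lam β₀ γ₀ δ₀ ξ / chDp lam β₀ γ₀ δ₀ ξ|

/-- γ(ξ) -/
def chGamma (lam β₀ γ₀ δ₀ : ℝ) (ξ : ℝ) : ℝ :=
  γ₀ + ξ * (γ₀ ^ 2 - lam ^ 2) * Real.exp (δ₀ / lam) / chA lam β₀ ξ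

/-- δ(ξ) -/
def chDelta (lam β₀ γ₀ δ₀ : ℝ) (ξ : ℝ) : ℝ :=
  lam * Real.log |4 * lam ^ 2 * Real.exp (δ₀ / lam)
    / (chDp lam β₀ γ₀ δ₀ ξ * chDm lam β₀ γ₀ δ₀ ξ)|

/-- β(ξ) -/
def chBeta (lam β₀ : ℝ) (ξ : ℝ) : ℝ := 2 * lam * β₀ / chA lam β₀ ξ

/-- m(ξ) -/
def chM (lam β₀ γ₀ δ₀ m₀ : ℝ) (ξ : ℝ) : ℝ :=
  m₀ * (chDm lam β₀ γ₀ δ₀ ξ) ^ 2 * (chDp lam β₀ γ₀ δ₀ ξ) ^ 2 / (chA lam β₀ ξ) ^ 4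

/-! On the region D₊D₋ > 0 one has e^{δ/λ} = 4λ²e^{δ₀/λ}/(D₊D₋), so every right-hand side of the
system is a rational function of ξ built from A, D₊, D₋. These are affine in ξ, so after the
derivatives are computed by the chain rule and the denominators cleared, each equation is a
polynomial identity in ξ. -/

section

variable {lam β₀ γ₀ δ₀ : ℝ}

@[simp] lemma chA_zero : chA lam β₀ 0 = 2 * lam := by simp [chA]

@[simp] lemma chDp_zero : chDp lam β₀ γ₀ δ₀ 0 = 2 * lam := by simp [chDp]

@[simp] lemma chDm_zero : chDm lam β₀ γ₀ δ₀ 0 = 2 * lam := by simp [chDm]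

lemma chX_zero (η : ℝ) : chX lam β₀ γ₀ δ₀ η 0 = η := by
  simp [chX]

lemma chM_zero (m₀ : ℝ) (hlam : lam ≠ 0) : chM lam β₀ γ₀ δ₀ m₀ 0 = m₀ := by
  rw [chM, chDm_zero, chDp_zero, chA_zero]
  field_simp

lemma chGamma_zero : chGamma lam β₀ γ₀ δ₀ 0 = γ₀ := by
  simp [chGamma]

lemma chDelta_zero (hlam : lam ≠ 0) : chDelta lam β₀ γ₀ δ₀ 0 = δ₀ := by
  have h : 4 * lam ^ 2 * Real.exp (δ₀ / lam) / (2 * lam * (2 * lam)) = Real.exp (δ₀ / lam) := by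
    field_simp
    ring
  rw [chDelta, chDp_zero, chDm_zero, h, abs_of_pos (Real.exp_pos _), Real.log_exp,
    mul_div_cancel₀ _ hlam]

lemma chBeta_zero (hlam : lam ≠ 0) : chBeta lam β₀ 0 = β₀ := by
  rw [chBeta, chA_zero]
  field_simp

lemma hasDerivAt_chA (ξ : ℝ) : HasDerivAt (chA lam β₀) (-β₀) ξ :=
  (((hasDerivAt_id ξ).neg.mul_const β₀).add_const (2 * lam)).congr_deriv (by ring)

lemma hasDerivAt_chDp (ξ : ℝ) :
    HasDerivAt (chDp lam β₀ γ₀ δ₀) (-β₀ + (γ₀ + lam) * Real.exp (δ₀ / lam)) ξ :=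
  ((hasDerivAt_chA ξ).add (((hasDerivAt_id ξ).const_mul (γ₀ + lam)).mul_const
    (Real.exp (δ₀ / lam)))).congr_deriv (by ring)

lemma hasDerivAt_chDm (ξ : ℝ) :
    HasDerivAt (chDm lam β₀ γ₀ δ₀) (-β₀ + (γ₀ - lam) * Real.exp (δ₀ / lam)) ξ :=
  ((hasDerivAt_chA ξ).add (((hasDerivAt_id ξ).const_mul (γ₀ - lam)).mul_const
    (Real.exp (δ₀ / lam)))).congr_deriv (by ring)

variable {ξ : ℝ}

lemma exp_chDelta_div (hlam : lam ≠ 0) (hpos : 0 < chDp lam β₀ γ₀ δ₀ ξ * chDm lam β₀ γ₀ δ₀ ξ) :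
    Real.exp (chDelta lam β₀ γ₀ δ₀ ξ / lam)
      = 4 * lam ^ 2 * Real.exp (δ₀ / lam) / (chDp lam β₀ γ₀ δ₀ ξ * chDm lam β₀ γ₀ δ₀ ξ) := by
  have hq : 0 < 4 * lam ^ 2 * Real.exp (δ₀ / lam) / (chDp lam β₀ γ₀ δ₀ ξ * chDm lam β₀ γ₀ δ₀ ξ) := by
    positivity
  rw [chDelta, mul_div_cancel_left₀ _ hlam, abs_of_pos hq, Real.exp_log hq]

lemma hasDerivAt_chX (η : ℝ) (hlam : lam ≠ 0)
    (hpos : 0 < chDp lam β₀ γ₀ δ₀ ξ * chDm lam β₀ γ₀ δ₀ ξ) :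
    HasDerivAt (chX lam β₀ γ₀ δ₀ η) (-Real.exp (chDelta lam β₀ γ₀ δ₀ ξ / lam)) ξ := by
  obtain ⟨hDp, hDm⟩ := mul_ne_zero_iff.mp hpos.ne'
  have h := (((hasDerivAt_chDm ξ).div (hasDerivAt_chDp ξ) hDp).log (div_ne_zero hDm hDp)).const_add η
  simp only [Pi.div_apply] at h
  have hX : chX lam β₀ γ₀ δ₀ η = fun x => η + Real.log (chDm lam β₀ γ₀ δ₀ x / chDp lam β₀ γ₀ δ₀ x) :=
    funext fun x => by rw [chX, Real.log_abs]
  rw [hX, exp_chDelta_div hlam hpos]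
  refine h.congr_deriv ?_
  field_simp
  simp only [chDp, chDm, chA]
  ring

lemma hasDerivAt_chBeta (hA : chA lam β₀ ξ ≠ 0) :
    HasDerivAt (chBeta lam β₀) (1 / (2 * lam) * chBeta lam β₀ ξ ^ 2) ξ := by
  refine ((hasDerivAt_const ξ (2 * lam * β₀)).div (hasDerivAt_chA ξ) hA).congr_deriv ?_
  simp only [chBeta, chA] at hA ⊢
  field_simp
  ring

lemma hasDerivAt_chGamma (hlam : lam ≠ 0) (hA : chA lam β₀ ξ ≠ 0)
    (hpos : 0 < chDp lam β₀ γ₀ δ₀ ξ * chDm lam β₀ γ₀ δ₀ ξ) :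
    HasDerivAt (chGamma lam β₀ γ₀ δ₀)
      (-(1 / (2 * lam)) * Real.exp (chDelta lam β₀ γ₀ δ₀ ξ / lam)
        * (lam ^ 2 - chGamma lam β₀ γ₀ δ₀ ξ ^ 2)) ξ := by
  have h := ((((hasDerivAt_id ξ).mul_const (γ₀ ^ 2 - lam ^ 2)).mul_const
    (Real.exp (δ₀ / lam))).div (hasDerivAt_chA ξ) hA).const_add γ₀
  simp only [Pi.div_apply, id] at h
  obtain ⟨hDp, hDm⟩ := mul_ne_zero_iff.mp hpos.ne'
  rw [exp_chDelta_div hlam hpos]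
  refine h.congr_deriv ?_
  simp only [chGamma]
  field_simp
  simp only [chDp, chDm, chA]
  ring

lemma hasDerivAt_chDelta (hlam : lam ≠ 0) (hA : chA lam β₀ ξ ≠ 0)
    (hpos : 0 < chDp lam β₀ γ₀ δ₀ ξ * chDm lam β₀ γ₀ δ₀ ξ) :
    HasDerivAt (chDelta lam β₀ γ₀ δ₀)
      (chBeta lam β₀ ξ - chGamma lam β₀ γ₀ δ₀ ξ * Real.exp (chDelta lam β₀ γ₀ δ₀ ξ / lam)) ξ := by
  obtain ⟨hDp, hDm⟩ := mul_ne_zero_iff.mp hpos.ne'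
  have hq : 4 * lam ^ 2 * Real.exp (δ₀ / lam) / (chDp lam β₀ γ₀ δ₀ ξ * chDm lam β₀ γ₀ δ₀ ξ) ≠ 0 :=
    by positivity
  have h := (((hasDerivAt_const ξ (4 * lam ^ 2 * Real.exp (δ₀ / lam))).div
    ((hasDerivAt_chDp ξ).mul (hasDerivAt_chDm ξ)) hpos.ne').log hq).const_mul lam
  simp only [Pi.div_apply, Pi.mul_apply] at h
  have hδ : chDelta lam β₀ γ₀ δ₀ = fun x => lam * Real.log (4 * lam ^ 2 * Real.exp (δ₀ / lam)
      / (chDp lam β₀ γ₀ δ₀ x * chDm lam β₀ γ₀ δ₀ x)) :=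
    funext fun x => by rw [chDelta, Real.log_abs]
  rw [exp_chDelta_div hlam hpos, hδ]
  refine h.congr_deriv ?_
  simp only [chBeta, chGamma]
  field_simp
  simp only [chDp, chDm, chA]
  ring

lemma hasDerivAt_chM (m₀ : ℝ) (hlam : lam ≠ 0) (hA : chA lam β₀ ξ ≠ 0)
    (hpos : 0 < chDp lam β₀ γ₀ δ₀ ξ * chDm lam β₀ γ₀ δ₀ ξ) :
    HasDerivAt (chM lam β₀ γ₀ δ₀ m₀)
      (2 / lam * chGamma lam β₀ γ₀ δ₀ ξ * Real.exp (chDelta lam β₀ γ₀ δ₀ ξ / lam)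
        * chM lam β₀ γ₀ δ₀ m₀ ξ) ξ := by
  have h := (((((hasDerivAt_chDm ξ).pow 2).const_mul m₀).mul ((hasDerivAt_chDp ξ).pow 2)).div
    ((hasDerivAt_chA ξ).pow 4) (pow_ne_zero 4 hA) :
      HasDerivAt (fun x => m₀ * chDm lam β₀ γ₀ δ₀ x ^ 2 * chDp lam β₀ γ₀ δ₀ x ^ 2 / chA lam β₀ x ^ 4) _ ξ)
  simp only [Pi.mul_apply, Pi.pow_apply] at h
  rw [exp_chDelta_div hlam hpos]
  refine h.congr_deriv ?_
  simp only [chGamma, chM]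
  field_simp
  simp only [chDp, chDm, chA]
  ring

end

/-- the explicit formulas solve the flow ODE system of the nonlocal
symmetry in the Camassa--Holm case, with the given initial values, wherever the
denominators are nonzero (and positive where needed). -/
theorem ch_flow_explicit_solution (lam β₀ γ₀ δ₀ m₀ η : ℝ) (hlam : lam ≠ 0) :
    chX lam β₀ γ₀ δ₀ η 0 = η ∧
    chM lam β₀ γ₀ δ₀ m₀ 0 = m₀ ∧
    chGamma lam β₀ γ₀ δ₀ 0 = γ₀ ∧
    chDelta lam β₀ γ₀ δ₀ 0 = δ₀ ∧
    chBeta lam β₀ 0 = β₀ ∧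
    ∀ ξ : ℝ, chA lam β₀ ξ ≠ 0 →
      0 < chDp lam β₀ γ₀ δ₀ ξ * chDm lam β₀ γ₀ δ₀ ξ →
      (HasDerivAt (chX lam β₀ γ₀ δ₀ η)
          (-(Real.exp (chDelta lam β₀ γ₀ δ₀ ξ / lam))) ξ ∧
       HasDerivAt (chM lam β₀ γ₀ δ₀ m₀)
          (2 / lam * chGamma lam β₀ γ₀ δ₀ ξ
            * Real.exp (chDelta lam β₀ γ₀ δ₀ ξ / lam) * chM lam β₀ γ₀ δ₀ m₀ ξ) ξ ∧
       HasDerivAt (chGamma lam β₀ γ₀ δ₀)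
          (-(1 / (2 * lam)) * Real.exp (chDelta lam β₀ γ₀ δ₀ ξ / lam)
            * (lam ^ 2 - (chGamma lam β₀ γ₀ δ₀ ξ) ^ 2)) ξ ∧
       HasDerivAt (chDelta lam β₀ γ₀ δ₀)
          (chBeta lam β₀ ξ - chGamma lam β₀ γ₀ δ₀ ξ
            * Real.exp (chDelta lam β₀ γ₀ δ₀ ξ / lam)) ξ ∧
       HasDerivAt (chBeta lam β₀) (1 / (2 * lam) * (chBeta lam β₀ ξ) ^ 2) ξ) :=
  ⟨chX_zero η, chM_zero m₀ hlam, chGamma_zero, chDelta_zero hlam, chBeta_zero hlam,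
    fun _ hA hpos => ⟨hasDerivAt_chX η hlam hpos, hasDerivAt_chM m₀ hlam hA hpos,
      hasDerivAt_chGamma hlam hA hpos, hasDerivAt_chDelta hlam hA hpos, hasDerivAt_chBeta hA⟩⟩
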